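/- In a multiplicity-free semi-simple tensor system over a commutative ring R, fix an L-tuple λ̃ = (λ_1,…,λ_L), an element ν ∈ I, and 2 ≤ i ≤ L−1. If ν acts one-dimensionally on the right of λ_{i-1}, then for every ν' ∈ I one has, as operators on H_{λ̃}, p_i^{(ν)} p_{i-1}^{(ν')} p_i^{(ν)} = (F^{λ_{i-1}λ_iλ_{i+1}}_{φ^r_ν(λ_{i-1})})^{ν'}_ν (F̄^{λ_{i-1}λ_iλ_{i+1}}_{φ^r_ν(λ_{i-1})})^ν_{ν'} · p_i^{(ν)}. -/

import Mathlib

open scoped Classical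
open Fin.NatCast

noncomputable section

/-- A multiplicity-free semi-simple tensor system over a commutative ring `R`,
with index set `I`, fusion constants `N`, and F-moves `F`, `Fbar`.
`F a b c d e f` denotes `(F^{abc}_d)^e_f` and `Fbar a b c d f e` denotes `(F̄^{abc}_d)^f_e`. -/
structure TensorSystem (R : Type*) [CommRing R] (I : Type*) where
  N : I → I → I → ℕ
  F : I → I → I → I → I → I → R
  Fbar : I → I → I → I → I → I → R
  N_le_one : ∀ a b c, N a b c ≤ 1
  N_assoc : ∀ a b c d, (∑ᶠ e, N a b e * N e c d) = ∑ᶠ e, N a e d * N b c e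
  N_finite : ∀ a b, (Function.support fun c => N a b c).Finite
  F_vanish : ∀ a b c d e f, N a b e * N b c f * N a f d * N e c d = 0 → F a b c d e f = 0
  Fbar_vanish : ∀ a b c d e f, N a b e * N b c f * N a f d * N e c d = 0 → Fbar a b c d f e = 0
  pentagon : ∀ a b c d e f g k l,
      (∑ᶠ h, F a b c g f h * F a h d e g k * F b c d k h l) = F f c d e g l * F a b l e f k
  F_Fbar : ∀ a b c d e e',
      (∑ᶠ f, F a b c d e f * Fbar a b c d f e')
        = (if e = e' then (1 : R) else 0) * (N a b e : R) * (N e c d : R)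
  Fbar_F : ∀ a b c d f f',
      (∑ᶠ e, Fbar a b c d f' e * F a b c d e f)
        = (if f = f' then (1 : R) else 0) * (N b c f : R) * (N a f d : R)

namespace TensorSystem

variable {R : Type*} [CommRing R] {I : Type*}

/-- `μ = (μ₀, μ₁, …, μ_L)` is a fusion path for the tuple `λ̃ = (lam 1, …, lam L)`:
`μ₀ ∈ I0` and `N_{μ_{i-1} λ_i}^{μ_i} = 1` for `1 ≤ i ≤ L`. -/
def IsPath (TS : TensorSystem R I) (L : ℕ) (I0 : Set I) (lam : ℕ → I)
    (μ : Fin (L + 1) → I) : Prop :=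
  μ 0 ∈ I0 ∧ ∀ i : ℕ, 1 ≤ i → i ≤ L →
    TS.N (μ ((i - 1 : ℕ) : Fin (L + 1))) (lam i) (μ ((i : ℕ) : Fin (L + 1))) = 1

/-- Matrix element `⟨μ'| p_i^{(ν)} |μ⟩` of the two-site projection operator. -/
def pMat (TS : TensorSystem R I) (L : ℕ) (lam : ℕ → I) (i : ℕ) (ν : I)
    (μ' μ : Fin (L + 1) → I) : R :=
  (∏ j ∈ Finset.univ.erase ((i : ℕ) : Fin (L + 1)), if μ j = μ' j then (1 : R) else 0)
    * TS.Fbar (μ ((i - 1 : ℕ) : Fin (L + 1))) (lam i) (lam (i + 1))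
        (μ ((i + 1 : ℕ) : Fin (L + 1))) ν (μ' ((i : ℕ) : Fin (L + 1)))
    * TS.F (μ ((i - 1 : ℕ) : Fin (L + 1))) (lam i) (lam (i + 1))
        (μ ((i + 1 : ℕ) : Fin (L + 1))) (μ ((i : ℕ) : Fin (L + 1))) ν

/-- Matrix elements of the composition of two operators on `H_{λ̃}`,
summing over the fusion-path basis. -/
def mulMat (TS : TensorSystem R I) (L : ℕ) (I0 : Set I) (lam : ℕ → I)
    (A B : (Fin (L + 1) → I) → (Fin (L + 1) → I) → R)
    (μ' μ : Fin (L + 1) → I) : R :=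
  ∑ᶠ μ'' ∈ {x : Fin (L + 1) → I | TS.IsPath L I0 lam x}, A μ' μ'' * B μ'' μ

/-- Two operators on `H_{λ̃}` are equal iff all their matrix elements between
fusion-path basis vectors agree. -/
def MatEqOn (TS : TensorSystem R I) (L : ℕ) (I0 : Set I) (lam : ℕ → I)
    (A B : (Fin (L + 1) → I) → (Fin (L + 1) → I) → R) : Prop :=
  ∀ μ' μ : Fin (L + 1) → I, TS.IsPath L I0 lam μ' → TS.IsPath L I0 lam μ → A μ' μ = B μ' μ

/-- Extended fusion numbers `N_{a a₁ ⋯ aₙ}^b` along a list `[a₁, …, aₙ]`. -/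
def Nseq (TS : TensorSystem R I) : I → List I → I → ℕ
  | a, [], b => if a = b then 1 else 0
  | a, c :: rest, b => ∑ᶠ x, TS.N a c x * Nseq TS x rest b

/-- `ν` acts one-dimensionally on the left of `μ`. -/
def ActsOneDimLeft (TS : TensorSystem R I) (ν μ : I) : Prop :=
  (∑ᶠ μ' : I, TS.N ν μ μ') = 1

/-- `ν` acts one-dimensionally on the right of `μ`. -/
def ActsOneDimRight (TS : TensorSystem R I) (ν μ : I) : Prop :=
  (∑ᶠ μ' : I, TS.N μ ν μ') = 1

end TensorSystem

/-- Matrix elements of the identity operator. -/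
def deltaMat {R : Type*} [CommRing R] {I : Type*} (L : ℕ)
    (μ' μ : Fin (L + 1) → I) : R :=
  ∏ j : Fin (L + 1), if μ j = μ' j then (1 : R) else 0

/-- Scalar multiple of a matrix of operator matrix elements. -/
def smulMat {R : Type*} [CommRing R] {α : Sort*} (c : R) (A : α → α → R) : α → α → R :=
  fun x y => c * A x y

/-!
Write `a = μ_{i-2}`, `b = λ_{i-1}`, `c = λ_i`, `d = λ_{i+1}`, `e = μ_{i+1}`, `f = μ_{i-1}` and
`f' = μ'_{i-1}`. The operator `p_i^{(ν)} p_{i-1}^{(ν')} p_i^{(ν)}` only changes `μ_{i-1}` and `μ_i`,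
and its matrix element is `F̄ · S · F` with
  `S = Σ_g (F^{f'cd}_e)^g_ν (F̄^{abc}_g)^{ν'}_{f'} (F^{abc}_g)^f_{ν'} (F̄^{fcd}_e)^ν_g`.
Inserting `Σ_k (F^{aν'd}_e)^g_k (F̄^{aν'd}_e)^k_{g'} = δ_{gg'}` between the two halves of the summand
and evaluating each half by a mixed form of the pentagon equation (some F-moves inverted through
(F.3)/(F.4)) gives
  `S = Σ_k (F^{abν}_e)^f_k (F̄^{bcd}_k)^ν_{ν'} (F^{bcd}_k)^{ν'}_ν (F̄^{abν}_e)^k_{f'}`.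
Since `ν` acts one-dimensionally on the right of `b`, only `k = φ^r_ν(b)` survives, and then
`(F^{abν}_e)^f_φ (F̄^{abν}_e)^φ_{f'} = δ_{ff'}` by (F.3).
-/

theorem finsum_comm_of_finite {α β M : Type*} [AddCommMonoid M] {f : α → β → M}
    {s : Set α} {t : Set β} (hs : s.Finite) (ht : t.Finite)
    (h : ∀ x y, f x y ≠ 0 → x ∈ s ∧ y ∈ t) :
    ∑ᶠ x, ∑ᶠ y, f x y = ∑ᶠ y, ∑ᶠ x, f x y := by
  have inner_x : ∀ y, ∑ᶠ x, f x y = ∑ x ∈ hs.toFinset, f x y := fun y =>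
    finsum_eq_sum_of_support_subset _ fun x hx => by simpa using (h x y hx).1
  have inner_y : ∀ x, ∑ᶠ y, f x y = ∑ y ∈ ht.toFinset, f x y := fun x =>
    finsum_eq_sum_of_support_subset _ fun y hy => by simpa using (h x y hy).2
  simp_rw [inner_x, inner_y]
  rw [finsum_eq_sum_of_support_subset (s := hs.toFinset), finsum_eq_sum_of_support_subset
    (s := ht.toFinset), Finset.sum_comm]
  · intro y hy
    obtain ⟨x, -, hx⟩ := Finset.exists_ne_zero_of_sum_ne_zero hy
    simpa using (h x y hx).2
  · intro x hx
    obtain ⟨y, -, hy⟩ := Finset.exists_ne_zero_of_sum_ne_zero hx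
    simpa using (h x y hy).1

theorem Fin.natCast_ne_natCast {L k l : ℕ} (hk : k ≤ L) (hl : l ≤ L) (h : k ≠ l) :
    (k : Fin (L + 1)) ≠ l := by
  intro e
  have := congrArg Fin.val e
  simp only [Fin.val_natCast, Nat.mod_eq_of_lt (Nat.lt_succ_of_le hk),
    Nat.mod_eq_of_lt (Nat.lt_succ_of_le hl)] at this
  exact h this

theorem finsum_mem_eq_finsum_update {ι α M : Type*} [DecidableEq ι] [AddCommMonoid M]
    (g : (ι → α) → M) (S : Set (ι → α)) (x : ι → α) (k : ι)
    (hline : ∀ y, g y ≠ 0 → ∀ j ≠ k, y j = x j)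
    (hS : ∀ a, g (Function.update x k a) ≠ 0 → Function.update x k a ∈ S) :
    ∑ᶠ y ∈ S, g y = ∑ᶠ a, g (Function.update x k a) := by
  rw [← finsum_mem_range (Function.update_injective x k)]
  refine finsum_mem_inter_support_eq' g S _ fun y hy => ⟨fun _ => ⟨y k, ?_⟩, ?_⟩
  · exact Function.update_eq_iff.mpr ⟨rfl, fun j hj => (hline y hy j hj).symm⟩
  · rintro ⟨a, rfl⟩
    exact hS a hy

namespace TensorSystem

section FMoves

variable {R : Type*} [CommRing R] {I : Type*} (TS : TensorSystem R I)

/-- The labels for which (F.1) allows `(F^{abc}_d)^e_f` and `(F̄^{abc}_d)^f_e` to be nonzero. -/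
def Admissible (a b c d e f : I) : Prop :=
  TS.N a b e = 1 ∧ TS.N b c f = 1 ∧ TS.N a f d = 1 ∧ TS.N e c d = 1

lemma N_eq_zero_of_ne_one {a b c : I} (h : TS.N a b c ≠ 1) : TS.N a b c = 0 := by
  have := TS.N_le_one a b c
  omega

lemma admissible_of_F_ne_zero {a b c d e f : I} (h : TS.F a b c d e f ≠ 0) :
    TS.Admissible a b c d e f := by
  by_contra hA
  refine h (TS.F_vanish a b c d e f ?_)
  simp only [Admissible, not_and_or] at hA
  rcases hA with hN | hN | hN | hN <;> simp [TS.N_eq_zero_of_ne_one hN]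

lemma admissible_of_Fbar_ne_zero {a b c d e f : I} (h : TS.Fbar a b c d f e ≠ 0) :
    TS.Admissible a b c d e f := by
  by_contra hA
  refine h (TS.Fbar_vanish a b c d e f ?_)
  simp only [Admissible, not_and_or] at hA
  rcases hA with hN | hN | hN | hN <;> simp [TS.N_eq_zero_of_ne_one hN]

lemma natCast_N_mul_eq_self {a b c : I} {x : R} (h : TS.N a b c = 0 → x = 0) :
    (TS.N a b c : R) * x = x := by
  rcases eq_or_ne (TS.N a b c) 1 with hN | hN
  · simp [hN]
  · simp [h (TS.N_eq_zero_of_ne_one hN)]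

lemma finite_support_of_N {g : I → R} {a b : I} (h : ∀ x, g x ≠ 0 → TS.N a b x = 1) :
    (Function.support g).Finite :=
  (TS.N_finite a b).subset fun x hx => by simp [h x hx]

lemma finsum_finsum_mul_F_mul_Fbar (a b c d : I) (X : I → R)
    (hX : ∀ e, X e ≠ 0 → TS.N a b e = 1 ∧ TS.N e c d = 1) (e₀ : I) :
    ∑ᶠ f, (∑ᶠ e, X e * TS.F a b c d e f) * TS.Fbar a b c d f e₀ = X e₀ := by
  calc _ = ∑ᶠ f, ∑ᶠ e, X e * (TS.F a b c d e f * TS.Fbar a b c d f e₀) := by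
        refine finsum_congr fun f => ?_
        rw [finsum_mul' _ _ (TS.finite_support_of_N fun e he =>
          (TS.admissible_of_F_ne_zero (right_ne_zero_of_mul he)).1)]
        simp only [mul_assoc]
    _ = ∑ᶠ e, X e * ∑ᶠ f, TS.F a b c d e f * TS.Fbar a b c d f e₀ := by
        rw [finsum_comm_of_finite (TS.N_finite b c) (TS.N_finite a b) fun f e he => by
          have hF := TS.admissible_of_F_ne_zero (left_ne_zero_of_mul (right_ne_zero_of_mul he))
          simp [hF.1, hF.2.1]]
        refine finsum_congr fun e => (mul_finsum' _ _ (TS.finite_support_of_N fun f hf =>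
          (TS.admissible_of_F_ne_zero (left_ne_zero_of_mul hf)).2.1)).symm
    _ = X e₀ := by
        simp_rw [TS.F_Fbar]
        rw [finsum_eq_single _ e₀ fun e he => by simp [he]]
        rcases eq_or_ne (X e₀) 0 with h0 | h0
        · simp [h0]
        · simp [(hX e₀ h0).1, (hX e₀ h0).2]

lemma finsum_Fbar_mul_finsum_F_mul (a b c d : I) (Y : I → R)
    (hY : ∀ f, Y f ≠ 0 → TS.N b c f = 1 ∧ TS.N a f d = 1) (f₀ : I) :
    ∑ᶠ e, TS.Fbar a b c d f₀ e * ∑ᶠ f, TS.F a b c d e f * Y f = Y f₀ := by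
  calc _ = ∑ᶠ e, ∑ᶠ f, TS.Fbar a b c d f₀ e * TS.F a b c d e f * Y f := by
        refine finsum_congr fun e => ?_
        rw [mul_finsum' _ _ (TS.finite_support_of_N fun f hf =>
          (TS.admissible_of_F_ne_zero (left_ne_zero_of_mul hf)).2.1)]
        simp only [mul_assoc]
    _ = ∑ᶠ f, (∑ᶠ e, TS.Fbar a b c d f₀ e * TS.F a b c d e f) * Y f := by
        rw [finsum_comm_of_finite (TS.N_finite a b) (TS.N_finite b c) fun e f he => by
          have hF := TS.admissible_of_F_ne_zero (right_ne_zero_of_mul (left_ne_zero_of_mul he))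
          simp [hF.1, hF.2.1]]
        refine finsum_congr fun f => (finsum_mul' _ _ (TS.finite_support_of_N fun e he =>
          (TS.admissible_of_F_ne_zero (right_ne_zero_of_mul he)).1)).symm
    _ = Y f₀ := by
        simp_rw [TS.Fbar_F]
        rw [finsum_eq_single _ f₀ fun f hf => by simp [hf]]
        rcases eq_or_ne (Y f₀) 0 with h0 | h0
        · simp [h0]
        · simp [(hY f₀ h0).1, (hY f₀ h0).2]

-- The pentagon equation with some of its F-moves moved to the other side through (F.3)/(F.4).

lemma F_mul_F_eq_finsum_Fbar_mul_F_mul_F (a b c d e g h k l : I) :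
    TS.F a h d e g k * TS.F b c d k h l
      = ∑ᶠ f, TS.Fbar a b c g h f * TS.F f c d e g l * TS.F a b l e f k := by
  refine (TS.finsum_Fbar_mul_finsum_F_mul a b c g (fun h => TS.F a h d e g k * TS.F b c d k h l)
    (fun h hh => ?_) h).symm.trans (finsum_congr fun f => ?_)
  · exact ⟨(TS.admissible_of_F_ne_zero (right_ne_zero_of_mul hh)).1,
      (TS.admissible_of_F_ne_zero (left_ne_zero_of_mul hh)).1⟩
  · simp_rw [← mul_assoc, TS.pentagon, mul_assoc]

lemma F_mul_F_eq_finsum_F_mul_F_mul_Fbar (a b c d e f g h k : I) :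
    TS.F a b c g f h * TS.F a h d e g k
      = ∑ᶠ l, TS.F f c d e g l * (TS.F a b l e f k * TS.Fbar b c d k l h) := by
  refine (TS.finsum_finsum_mul_F_mul_Fbar b c d k (fun h => TS.F a b c g f h * TS.F a h d e g k)
    (fun h hh => ?_) h).symm.trans (finsum_congr fun l => ?_)
  · exact ⟨(TS.admissible_of_F_ne_zero (left_ne_zero_of_mul hh)).2.1,
      (TS.admissible_of_F_ne_zero (right_ne_zero_of_mul hh)).2.1⟩
  · rw [TS.pentagon, mul_assoc]

lemma finsum_Fbar_mul_F_mul_F (a b c d e f h k l : I) :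
    ∑ᶠ g, TS.Fbar f c d e l g * TS.F a b c g f h * TS.F a h d e g k
      = TS.F a b l e f k * TS.Fbar b c d k l h := by
  refine (finsum_congr fun g => ?_).trans (TS.finsum_Fbar_mul_finsum_F_mul f c d e
    (fun l => TS.F a b l e f k * TS.Fbar b c d k l h) (fun l hl => ?_) l)
  · rw [mul_assoc, TS.F_mul_F_eq_finsum_F_mul_F_mul_Fbar]
  · exact ⟨(TS.admissible_of_Fbar_ne_zero (right_ne_zero_of_mul hl)).2.1,
      (TS.admissible_of_F_ne_zero (left_ne_zero_of_mul hl)).2.2.2⟩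

lemma finsum_F_mul_F_mul_Fbar (a a₀ b c d e g h l : I) :
    ∑ᶠ k, TS.F a h d e g k * (TS.F b c d k h l * TS.Fbar a b l e k a₀)
      = TS.Fbar a b c g h a₀ * TS.F a₀ c d e g l := by
  refine (finsum_congr fun k => ?_).trans (TS.finsum_finsum_mul_F_mul_Fbar a b l e
    (fun f => TS.Fbar a b c g h f * TS.F f c d e g l) (fun f hf => ?_) a₀)
  · rw [← mul_assoc, TS.F_mul_F_eq_finsum_Fbar_mul_F_mul_F]
  · exact ⟨(TS.admissible_of_Fbar_ne_zero (left_ne_zero_of_mul hf)).1,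
      (TS.admissible_of_F_ne_zero (right_ne_zero_of_mul hf)).2.2.1⟩

lemma finsum_Fbar_mul_Fbar_mul_F (a a₀ b c d e h k l : I) :
    ∑ᶠ g, TS.Fbar a h d e k g * (TS.Fbar a b c g h a₀ * TS.F a₀ c d e g l)
      = TS.F b c d k h l * TS.Fbar a b l e k a₀ := by
  refine (finsum_congr fun g => ?_).trans (TS.finsum_Fbar_mul_finsum_F_mul a h d e
    (fun k => TS.F b c d k h l * TS.Fbar a b l e k a₀) (fun k hk => ?_) k)
  · rw [TS.finsum_F_mul_F_mul_Fbar]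
  · exact ⟨(TS.admissible_of_F_ne_zero (left_ne_zero_of_mul hk)).2.2.2,
      (TS.admissible_of_Fbar_ne_zero (right_ne_zero_of_mul hk)).2.2.1⟩

lemma finsum_mul_eq_finsum_finsum_F_mul_finsum_Fbar {a d e h : I} (A B : I → R)
    (hA : ∀ g, A g ≠ 0 → TS.N a h g = 1 ∧ TS.N g d e = 1) :
    ∑ᶠ g, A g * B g
      = ∑ᶠ k, (∑ᶠ g, A g * TS.F a h d e g k) * ∑ᶠ g, TS.Fbar a h d e k g * B g := by
  symm
  calc _ = ∑ᶠ k, ∑ᶠ g, (∑ᶠ g', A g' * TS.F a h d e g' k) * TS.Fbar a h d e k g * B g := by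
        refine finsum_congr fun k => ?_
        rw [mul_finsum' _ _ (TS.finite_support_of_N fun g hg =>
          (TS.admissible_of_Fbar_ne_zero (left_ne_zero_of_mul hg)).1)]
        simp only [mul_assoc]
    _ = ∑ᶠ g, (∑ᶠ k, (∑ᶠ g', A g' * TS.F a h d e g' k) * TS.Fbar a h d e k g) * B g := by
        rw [finsum_comm_of_finite (TS.N_finite h d) (TS.N_finite a h) fun k g hkg => by
          have hF := TS.admissible_of_Fbar_ne_zero (right_ne_zero_of_mul (left_ne_zero_of_mul hkg))
          simp [hF.1, hF.2.1]]
        refine finsum_congr fun g => (finsum_mul' _ _ (TS.finite_support_of_N fun k hk =>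
          (TS.admissible_of_Fbar_ne_zero (right_ne_zero_of_mul hk)).2.1)).symm
    _ = ∑ᶠ g, A g * B g := by
        simp_rw [TS.finsum_finsum_mul_F_mul_Fbar a h d e A hA]

variable {TS} in
lemma ActsOneDimRight.N_eq_zero_of_ne {ν b φ : I}
    (hone : TS.ActsOneDimRight ν b) (hφ : TS.N b ν φ = 1) {k : I} (hk : k ≠ φ) :
    TS.N b ν k = 0 := by
  refine TS.N_eq_zero_of_ne_one fun hN => ?_
  have hsub : {φ, k} ⊆ (TS.N_finite b ν).toFinset := by
    intro x hx
    rcases Finset.mem_insert.mp hx with rfl | hx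
    · simp [hφ]
    · simp [Finset.mem_singleton.mp hx, hN]
  have hle := Finset.sum_le_sum_of_subset hsub (f := TS.N b ν)
  rw [Finset.sum_pair hk.symm, ← finsum_eq_sum _ (TS.N_finite b ν), hone, hφ, hN] at hle
  omega

theorem finsum_F_mul_Fbar_mul_F_mul_Fbar_of_actsOneDimRight {a b c d e f a₀ h ν φ : I}
    (hone : TS.ActsOneDimRight ν b) (hφ : TS.N b ν φ = 1) :
    ∑ᶠ g, TS.F a₀ c d e g ν * TS.Fbar a b c g h a₀ * TS.F a b c g f h * TS.Fbar f c d e ν g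
      = (if f = a₀ then (TS.N a b f : R) * TS.N f ν e else 0)
          * (TS.F b c d φ h ν * TS.Fbar b c d φ ν h) := by
  have hF_zero : ∀ k, k ≠ φ → TS.F a b ν e f k = 0 := fun k hk =>
    TS.F_vanish _ _ _ _ _ _ (by simp [hone.N_eq_zero_of_ne hφ hk])
  have hF_Fbar_φ : TS.F a b ν e f φ * TS.Fbar a b ν e φ a₀
      = if f = a₀ then (TS.N a b f : R) * TS.N f ν e else 0 := by
    rw [← finsum_eq_single (fun k => TS.F a b ν e f k * TS.Fbar a b ν e k a₀) φ
      fun k hk => by simp [hF_zero k hk], TS.F_Fbar]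
    split_ifs <;> simp
  calc _ = ∑ᶠ g, (TS.Fbar f c d e ν g * TS.F a b c g f h)
          * (TS.Fbar a b c g h a₀ * TS.F a₀ c d e g ν) := finsum_congr fun g => by ring
    _ = ∑ᶠ k, (TS.F a b ν e f k * TS.Fbar b c d k ν h)
          * (TS.F b c d k h ν * TS.Fbar a b ν e k a₀) := by
        rw [TS.finsum_mul_eq_finsum_finsum_F_mul_finsum_Fbar _ _ fun g hg =>
          ⟨(TS.admissible_of_F_ne_zero (right_ne_zero_of_mul hg)).2.2.1,
            (TS.admissible_of_Fbar_ne_zero (left_ne_zero_of_mul hg)).2.2.2⟩]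
        simp_rw [TS.finsum_Fbar_mul_F_mul_F, TS.finsum_Fbar_mul_Fbar_mul_F]
    _ = _ := by
        rw [finsum_eq_single _ φ fun k hk => by simp [hF_zero k hk], ← hF_Fbar_φ]
        ring

end FMoves

section Paths

variable {R : Type*} [CommRing R] {I : Type*} {TS : TensorSystem R I} {L : ℕ} {I0 : Set I}
  {lam : ℕ → I}

theorem IsPath.update {μ : Fin (L + 1) → I} (hμ : TS.IsPath L I0 lam μ) {i : ℕ} (hi : 1 ≤ i)
    (hiL : i + 1 ≤ L) {b : I} (h₁ : TS.N (μ (i - 1 : ℕ)) (lam i) b = 1)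
    (h₂ : TS.N b (lam (i + 1)) (μ (i + 1 : ℕ)) = 1) :
    TS.IsPath L I0 lam (Function.update μ (i : Fin (L + 1)) b) := by
  refine ⟨?_, fun j hj hjL => ?_⟩
  · rw [Function.update_of_ne]
    · exact hμ.1
    · simpa using Fin.natCast_ne_natCast (L := L) (l := i) (Nat.zero_le L) (by omega) (by omega)
  rcases eq_or_ne j i with rfl | hji
  · rwa [Function.update_self, Function.update_of_ne (Fin.natCast_ne_natCast (by omega) hjL
      (by omega))]
  rcases eq_or_ne j (i + 1) with rfl | hji'
  · rwa [Nat.add_sub_cancel, Function.update_self, Function.update_of_ne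
      (Fin.natCast_ne_natCast hjL (by omega) (by omega))]
  rw [Function.update_of_ne (Fin.natCast_ne_natCast (by omega) (by omega) (by omega)),
    Function.update_of_ne (Fin.natCast_ne_natCast hjL (by omega) hji)]
  exact hμ.2 j hj hjL

theorem pMat_eq_zero_of_ne {i : ℕ} {ν : I} {μ' μ : Fin (L + 1) → I} {j : Fin (L + 1)}
    (hj : j ≠ i) (h : μ j ≠ μ' j) : TS.pMat L lam i ν μ' μ = 0 := by
  rw [pMat, Finset.prod_eq_zero (Finset.mem_erase.mpr ⟨hj, Finset.mem_univ j⟩) (if_neg h)]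
  ring

theorem pMat_of_forall_eq {i : ℕ} {ν : I} {μ' μ : Fin (L + 1) → I}
    (h : ∀ j ≠ (i : Fin (L + 1)), μ j = μ' j) :
    TS.pMat L lam i ν μ' μ
      = TS.Fbar (μ (i - 1 : ℕ)) (lam i) (lam (i + 1)) (μ (i + 1 : ℕ)) ν (μ' i)
        * TS.F (μ (i - 1 : ℕ)) (lam i) (lam (i + 1)) (μ (i + 1 : ℕ)) (μ i) ν := by
  rw [pMat, Finset.prod_eq_one fun j hj => if_pos (h j (Finset.ne_of_mem_erase hj)), one_mul]

theorem pMat_update_left (i : ℕ) (ν : I) (μ : Fin (L + 1) → I) (b : I) :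
    TS.pMat L lam i ν (Function.update μ i b) μ
      = TS.Fbar (μ (i - 1 : ℕ)) (lam i) (lam (i + 1)) (μ (i + 1 : ℕ)) ν b
        * TS.F (μ (i - 1 : ℕ)) (lam i) (lam (i + 1)) (μ (i + 1 : ℕ)) (μ i) ν := by
  rw [pMat_of_forall_eq fun j hj => (Function.update_of_ne hj _ _).symm, Function.update_self]

theorem pMat_update_right {i : ℕ} (hi : 1 ≤ i) (hiL : i + 1 ≤ L) (ν : I)
    (μ' : Fin (L + 1) → I) (b : I) :
    TS.pMat L lam i ν μ' (Function.update μ' i b)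
      = TS.Fbar (μ' (i - 1 : ℕ)) (lam i) (lam (i + 1)) (μ' (i + 1 : ℕ)) ν (μ' i)
        * TS.F (μ' (i - 1 : ℕ)) (lam i) (lam (i + 1)) (μ' (i + 1 : ℕ)) b ν := by
  rw [pMat_of_forall_eq fun j hj => Function.update_of_ne hj _ _, Function.update_self,
    Function.update_of_ne (Fin.natCast_ne_natCast (by omega) (by omega) (by omega)),
    Function.update_of_ne (Fin.natCast_ne_natCast (by omega) (by omega) (by omega))]

theorem mulMat_pMat_left {i : ℕ} (hi : 1 ≤ i) (hiL : i + 1 ≤ L) (ν : I)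
    (B : (Fin (L + 1) → I) → (Fin (L + 1) → I) → R) {μ' : Fin (L + 1) → I}
    (hμ' : TS.IsPath L I0 lam μ') (μ : Fin (L + 1) → I) :
    TS.mulMat L I0 lam (TS.pMat L lam i ν) B μ' μ
      = ∑ᶠ b, TS.pMat L lam i ν μ' (Function.update μ' i b) * B (Function.update μ' i b) μ := by
  refine finsum_mem_eq_finsum_update _ _ μ' _ (fun y hy j hj => ?_) fun b hb => ?_
  · by_contra hne
    exact left_ne_zero_of_mul hy (pMat_eq_zero_of_ne hj hne)
  · rw [pMat_update_right hi hiL] at hb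
    have hF := TS.admissible_of_F_ne_zero (right_ne_zero_of_mul (left_ne_zero_of_mul hb))
    exact hμ'.update hi hiL hF.1 hF.2.2.2

theorem mulMat_pMat_right {i : ℕ} (hi : 1 ≤ i) (hiL : i + 1 ≤ L) (ν : I)
    (A : (Fin (L + 1) → I) → (Fin (L + 1) → I) → R) (μ' : Fin (L + 1) → I)
    {μ : Fin (L + 1) → I} (hμ : TS.IsPath L I0 lam μ) :
    TS.mulMat L I0 lam A (TS.pMat L lam i ν) μ' μ
      = ∑ᶠ b, A μ' (Function.update μ i b) * TS.pMat L lam i ν (Function.update μ i b) μ := by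
  refine finsum_mem_eq_finsum_update _ _ μ _ (fun y hy j hj => ?_) fun b hb => ?_
  · by_contra hne
    exact right_ne_zero_of_mul hy (pMat_eq_zero_of_ne hj (Ne.symm hne))
  · rw [pMat_update_left] at hb
    have hF := TS.admissible_of_Fbar_ne_zero (left_ne_zero_of_mul (right_ne_zero_of_mul hb))
    exact hμ.update hi hiL hF.1 hF.2.2.2

theorem mulMat_pMat_mulMat_pMat_pMat {i : ℕ} (hi : 1 ≤ i) (hiL : i + 1 ≤ L) (ν ν' : I)
    {μ' μ : Fin (L + 1) → I} (hμ' : TS.IsPath L I0 lam μ') (hμ : TS.IsPath L I0 lam μ) :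
    TS.mulMat L I0 lam (TS.pMat L lam i ν)
        (TS.mulMat L I0 lam (TS.pMat L lam (i - 1) ν') (TS.pMat L lam i ν)) μ' μ
      = ∑ᶠ b, TS.pMat L lam i ν μ' (Function.update μ' i b)
          * (TS.pMat L lam (i - 1) ν' (Function.update μ' i b) (Function.update μ i b)
            * TS.pMat L lam i ν (Function.update μ i b) μ) := by
  rw [mulMat_pMat_left hi hiL _ _ hμ']
  refine finsum_congr fun b => ?_
  rw [mulMat_pMat_right hi hiL _ _ _ hμ, finsum_eq_single _ b fun b' hb' => ?_]
  rw [pMat_eq_zero_of_ne (j := (i : Fin (L + 1)))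
    (Fin.natCast_ne_natCast (by omega) (by omega) (by omega)) (by simpa using hb'), zero_mul]

theorem pMat_pred_update_update {i : ℕ} (hi : 1 ≤ i) (hiL : i ≤ L) (ν' : I)
    {μ' μ : Fin (L + 1) → I} (hagree : ∀ j : Fin (L + 1), j ≠ (i - 1 : ℕ) → j ≠ i → μ j = μ' j)
    (b : I) :
    TS.pMat L lam (i - 1) ν' (Function.update μ' i b) (Function.update μ i b)
      = TS.Fbar (μ (i - 2 : ℕ)) (lam (i - 1)) (lam i) b ν' (μ' (i - 1 : ℕ))
        * TS.F (μ (i - 2 : ℕ)) (lam (i - 1)) (lam i) b (μ (i - 1 : ℕ)) ν' := by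
  have hne : ((i - 1 : ℕ) : Fin (L + 1)) ≠ i := Fin.natCast_ne_natCast (by omega) hiL (by omega)
  rw [pMat_of_forall_eq fun j hj => ?_, show i - 1 - 1 = i - 2 by omega,
    show i - 1 + 1 = i by omega, Function.update_self, Function.update_of_ne hne,
    Function.update_of_ne hne,
    Function.update_of_ne (Fin.natCast_ne_natCast (by omega) hiL (by omega))]
  rcases eq_or_ne j i with rfl | hji
  · simp
  · simp only [Function.update_of_ne hji, hagree j hj hji]

theorem mulMat_pMat_mulMat_pMat_pMat_of_agree {i : ℕ} (hi : 1 ≤ i) (hiL : i + 1 ≤ L)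
    (ν ν' : I) {μ' μ : Fin (L + 1) → I} (hμ' : TS.IsPath L I0 lam μ')
    (hμ : TS.IsPath L I0 lam μ)
    (hagree : ∀ j : Fin (L + 1), j ≠ (i - 1 : ℕ) → j ≠ i → μ j = μ' j) :
    TS.mulMat L I0 lam (TS.pMat L lam i ν)
        (TS.mulMat L I0 lam (TS.pMat L lam (i - 1) ν') (TS.pMat L lam i ν)) μ' μ
      = TS.Fbar (μ' (i - 1 : ℕ)) (lam i) (lam (i + 1)) (μ (i + 1 : ℕ)) ν (μ' i)
        * (∑ᶠ g, TS.F (μ' (i - 1 : ℕ)) (lam i) (lam (i + 1)) (μ (i + 1 : ℕ)) g ν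
            * TS.Fbar (μ (i - 2 : ℕ)) (lam (i - 1)) (lam i) g ν' (μ' (i - 1 : ℕ))
            * TS.F (μ (i - 2 : ℕ)) (lam (i - 1)) (lam i) g (μ (i - 1 : ℕ)) ν'
            * TS.Fbar (μ (i - 1 : ℕ)) (lam i) (lam (i + 1)) (μ (i + 1 : ℕ)) ν g)
        * TS.F (μ (i - 1 : ℕ)) (lam i) (lam (i + 1)) (μ (i + 1 : ℕ)) (μ i) ν := by
  have he : μ' (i + 1 : ℕ) = μ (i + 1 : ℕ) :=
    (hagree _ (Fin.natCast_ne_natCast hiL (by omega) (by omega))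
      (Fin.natCast_ne_natCast hiL (by omega) (by omega))).symm
  rw [mulMat_pMat_mulMat_pMat_pMat hi hiL ν ν' hμ' hμ, mul_finsum', finsum_mul']
  · refine finsum_congr fun g => ?_
    rw [pMat_update_right hi hiL, pMat_pred_update_update hi (by omega) ν' hagree,
      pMat_update_left, he]
    ring
  · exact TS.finite_support_of_N fun g hg => (TS.admissible_of_F_ne_zero (left_ne_zero_of_mul
      (left_ne_zero_of_mul (left_ne_zero_of_mul (right_ne_zero_of_mul hg))))).1
  · exact TS.finite_support_of_N fun g hg => (TS.admissible_of_F_ne_zero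
      (left_ne_zero_of_mul (left_ne_zero_of_mul (left_ne_zero_of_mul hg)))).1

theorem mulMat_pMat_mulMat_pMat_pMat_eq_zero {i : ℕ} (hi : 1 ≤ i) (hiL : i + 1 ≤ L)
    (ν ν' : I) {μ' μ : Fin (L + 1) → I} (hμ' : TS.IsPath L I0 lam μ')
    (hμ : TS.IsPath L I0 lam μ) {j : Fin (L + 1)} (hj₁ : j ≠ (i - 1 : ℕ)) (hj₂ : j ≠ i)
    (hj : μ j ≠ μ' j) :
    TS.mulMat L I0 lam (TS.pMat L lam i ν)
        (TS.mulMat L I0 lam (TS.pMat L lam (i - 1) ν') (TS.pMat L lam i ν)) μ' μ = 0 := by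
  rw [mulMat_pMat_mulMat_pMat_pMat hi hiL ν ν' hμ' hμ]
  refine finsum_eq_zero_of_forall_eq_zero fun b => ?_
  rw [pMat_eq_zero_of_ne (j := j) hj₁ (by simpa [Function.update_of_ne hj₂] using hj)]
  ring

end Paths

end TensorSystem

theorem TL_like_from_one_dim_right_general
    {R : Type*} [CommRing R] {I : Type*}
    (TS : TensorSystem R I) (L : ℕ) (I0 : Set I)
    (lam : ℕ → I) (ν : I) (i : ℕ) (hi : 2 ≤ i) (hiL : i + 1 ≤ L)
    (hone : TS.ActsOneDimRight ν (lam (i - 1)))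
    (φ : I) (hφ : TS.N (lam (i - 1)) ν φ = 1) (ν' : I) :
    TS.MatEqOn L I0 lam
      (TS.mulMat L I0 lam
      (TS.pMat L lam (i) ν)
      (TS.mulMat L I0 lam
      (TS.pMat L lam (i - 1) ν')
      (TS.pMat L lam (i) ν)))
      (smulMat (TS.F (lam (i - 1)) (lam i) (lam (i + 1)) φ ν' ν
          * TS.Fbar (lam (i - 1)) (lam i) (lam (i + 1)) φ ν ν')
        (TS.pMat L lam (i) ν)) := by
  intro μ' μ hμ' hμ
  rw [smulMat]
  by_cases hagree : ∀ j : Fin (L + 1), j ≠ (i - 1 : ℕ) → j ≠ i → μ j = μ' j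
  swap
  · push Not at hagree
    obtain ⟨j, hj₁, hj₂, hj⟩ := hagree
    rw [TS.mulMat_pMat_mulMat_pMat_pMat_eq_zero (by omega) hiL ν ν' hμ' hμ hj₁ hj₂ hj,
      TS.pMat_eq_zero_of_ne hj₂ hj, mul_zero]
  rw [TS.mulMat_pMat_mulMat_pMat_pMat_of_agree (by omega) hiL ν ν' hμ' hμ hagree,
    TS.finsum_F_mul_Fbar_mul_F_mul_Fbar_of_actsOneDimRight hone hφ]
  by_cases hf : μ (i - 1 : ℕ) = μ' (i - 1 : ℕ)
  · have hpath := hμ.2 (i - 1) (by omega) (by omega)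
    rw [show i - 1 - 1 = i - 2 by omega] at hpath
    have hμμ' : ∀ j ≠ (i : Fin (L + 1)), μ j = μ' j := fun j hj => by
      rcases eq_or_ne j (i - 1 : ℕ) with rfl | hj'
      exacts [hf, hagree j hj' hj]
    -- `N_{μ_{i-1} ν}^{μ_{i+1}}` is absorbed by `F̄^{μ_{i-1} λ_i λ_{i+1}}_{μ_{i+1}}`.
    rw [if_pos hf, hpath, TS.pMat_of_forall_eq hμμ', ← hf, Nat.cast_one, one_mul,
      mul_left_comm, mul_assoc, TS.natCast_N_mul_eq_self fun h0 => by
        rw [TS.Fbar_vanish _ _ _ _ _ _ (by simp only [h0, mul_zero, zero_mul])]; ring]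
    ring
  · rw [if_neg hf, TS.pMat_eq_zero_of_ne (j := (i - 1 : ℕ))
      (Fin.natCast_ne_natCast (by omega) (by omega) (by omega)) hf]
    ring

/-- if `ν` acts one-dimensionally on the right of `λ_{i-1}` then
`p_i^{(ν)} p_{i-1}^{(ν')} p_i^{(ν)}` is the stated multiple of `p_i^{(ν)}`. -/
theorem TL_like_from_one_dim_right
    {R : Type*} [CommRing R] {I : Type*}
    (TS : TensorSystem R I) (L : ℕ) (I0 : Set I) (hI0 : I0.Finite)
    (lam : ℕ → I) (ν : I) (i : ℕ) (hi : 2 ≤ i) (hiL : i + 1 ≤ L)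
    (hone : TS.ActsOneDimRight ν (lam (i - 1)))
    (φ : I) (hφ : TS.N (lam (i - 1)) ν φ = 1) (ν' : I) :
    TS.MatEqOn L I0 lam
      (TS.mulMat L I0 lam
      (TS.pMat L lam (i) ν)
      (TS.mulMat L I0 lam
      (TS.pMat L lam (i - 1) ν')
      (TS.pMat L lam (i) ν)))
      (smulMat (TS.F (lam (i - 1)) (lam i) (lam (i + 1)) φ ν' ν
          * TS.Fbar (lam (i - 1)) (lam i) (lam (i + 1)) φ ν ν')
        (TS.pMat L lam (i) ν)) :=
  TL_like_from_one_dim_right_general TS L I0 lam ν i hi hiL hone φ hφ ν'
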